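/- For the maximally entangled state σ = Φ_d and the isotropic state ρ = (1−ε)Φ_d + (ε/(d²−1))(𝟙 − Φ_d) on ℂ^d ⊗ ℂ^d, one has (1/2)‖ρ−σ‖₁ = ε and S(A|B)_ρ − S(A|B)_σ = ε·log(d²−1) + h(ε). -/

import Mathlib

/-!
`Φ_d` is a rank-one projection, so `ρ = (1 - ε) Φ_d + c (1 - Φ_d)` and
`ρ - Φ_d = -ε Φ_d + c (1 - Φ_d)`, with `c = ε / (d² - 1)`, are functions of `Φ_d` in the
functional calculus: their eigenvalues are `1 - ε`, resp. `-ε`, once and `c` with multiplicity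
`d² - 1`. Hence `‖ρ - Φ_d‖₁ = ε + (d² - 1) c = 2ε`, `S(Φ_d) = 0` and
`S(ρ) = η(1 - ε) + (d² - 1) η(c) = h(ε) + ε log(d² - 1)` with `η x = -x log x`. Both states have
the maximally mixed marginal on `B`, so the marginal entropies cancel.
-/

open Matrix BigOperators
open scoped Kronecker ComplexOrder

noncomputable def shannonEntropy {d : ℕ} (p : Fin d → ℝ) : ℝ := ∑ x, Real.negMulLog (p x)

noncomputable def binEnt (x : ℝ) : ℝ := Real.negMulLog x + Real.negMulLog (1 - x)

def IsProb {d : ℕ} (p : Fin d → ℝ) : Prop := (∀ x, 0 ≤ p x) ∧ ∑ x, p x = 1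

def IsDensity {n : Type*} [Fintype n] [DecidableEq n] (ρ : Matrix n n ℂ) : Prop :=
  ρ.PosSemidef ∧ ρ.trace = 1

noncomputable def traceNorm {n : Type*} [Fintype n] [DecidableEq n] (A : Matrix n n ℂ) : ℝ :=
  ∑ i, Real.sqrt ((Matrix.posSemidef_conjTranspose_mul_self A).1.eigenvalues i)

noncomputable def vnEntropy {n : Type*} [Fintype n] [DecidableEq n] (ρ : Matrix n n ℂ) : ℝ :=
  if h : ρ.IsHermitian then ∑ i, Real.negMulLog (h.eigenvalues i) else 0

noncomputable def ptraceA {a b : ℕ} (ρ : Matrix (Fin a × Fin b) (Fin a × Fin b) ℂ) : Matrix (Fin b) (Fin b) ℂ :=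
  Matrix.of fun j j' => ∑ i, ρ (i, j) (i, j')

noncomputable def ptraceB {a b : ℕ} (ρ : Matrix (Fin a × Fin b) (Fin a × Fin b) ℂ) : Matrix (Fin a) (Fin a) ℂ :=
  Matrix.of fun i i' => ∑ j, ρ (i, j) (i', j)

noncomputable def condEnt {a b : ℕ} (ρ : Matrix (Fin a × Fin b) (Fin a × Fin b) ℂ) : ℝ :=
  vnEntropy ρ - vnEntropy (ptraceA ρ)

noncomputable def posPart {n : Type*} [Fintype n] [DecidableEq n] (A : Matrix n n ℂ) : Matrix n n ℂ :=
  if h : A.IsHermitian then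
    (h.eigenvectorUnitary : Matrix n n ℂ) * Matrix.diagonal (fun i => ((max (h.eigenvalues i) 0 : ℝ) : ℂ)) *
      (h.eigenvectorUnitary : Matrix n n ℂ)ᴴ
  else 0

noncomputable def matLog {n : Type*} [Fintype n] [DecidableEq n] (A : Matrix n n ℂ) : Matrix n n ℂ :=
  if h : A.IsHermitian then
    (h.eigenvectorUnitary : Matrix n n ℂ) * Matrix.diagonal (fun i => (Real.log (h.eigenvalues i) : ℂ)) *
      (h.eigenvectorUnitary : Matrix n n ℂ)ᴴ
  else 0

noncomputable def relEnt {n : Type*} [Fintype n] [DecidableEq n] (ρ γ : Matrix n n ℂ) : ℝ :=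
  ((ρ * (matLog ρ - matLog γ)).trace).re

open Classical in
noncomputable def matSqrt {n : Type*} [Fintype n] [DecidableEq n] (A : Matrix n n ℂ) : Matrix n n ℂ :=
  if h : A.PosSemidef then
    h.1.eigenvectorUnitary.1 * Matrix.diagonal ((↑) ∘ Real.sqrt ∘ h.1.eigenvalues) *
      (star h.1.eigenvectorUnitary : Matrix n n ℂ)
  else 0

noncomputable def fidelity {n : Type*} [Fintype n] [DecidableEq n] (ρ σ : Matrix n n ℂ) : ℝ :=
  traceNorm (matSqrt ρ * matSqrt σ)

noncomputable def maxEig {n : Type*} [Fintype n] [DecidableEq n] (A : Matrix n n ℂ) : ℝ :=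
  if h : A.IsHermitian then ⨆ i, h.eigenvalues i else 0

noncomputable def outer {n : Type*} [Fintype n] (v : n → ℂ) : Matrix n n ℂ :=
  Matrix.vecMulVec v (star v)

theorem cfc_mul_add_mul_one_sub {A : Type*} [Ring A] [StarRing A] [Algebra ℝ A] [TopologicalSpace A]
    [ContinuousFunctionalCalculus ℝ A IsSelfAdjoint] {a : A} (ha : IsSelfAdjoint a) (r s : ℝ) :
    cfc (fun x => r * x + s * (1 - x)) a = r • a + s • (1 - a) := by
  rw [cfc_add .., cfc_const_mul .., cfc_const_mul .., cfc_id' .., cfc_sub .., cfc_const_one ..,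
    cfc_id' ..]

namespace Matrix

variable {𝕜 n : Type*} [RCLike 𝕜] [Fintype n] [DecidableEq n] {A : Matrix n n 𝕜}

theorem IsHermitian.sum_comp_eigenvalues_cfc (hA : A.IsHermitian) (f : ℝ → ℝ)
    (hB : (cfc f A).IsHermitian) (g : ℝ → ℝ) :
    ∑ i, g (hB.eigenvalues i) = ∑ i, g (f (hA.eigenvalues i)) := by
  have hroots : Multiset.map (RCLike.ofReal ∘ hB.eigenvalues) Finset.univ.val
      = Multiset.map (fun i => ((f (hA.eigenvalues i) : ℝ) : 𝕜)) Finset.univ.val := by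
    rw [← hB.roots_charpoly_eq_eigenvalues, hA.charpoly_cfc_eq, Polynomial.roots_prod]
    · simp
    · simp [Finset.prod_ne_zero_iff, Polynomial.X_sub_C_ne_zero]
  simpa [Multiset.map_map, Function.comp_def] using
    congrArg (fun s => (s.map (g ∘ RCLike.re)).sum) hroots

theorem IsHermitian.eigenvalues_eq_zero_or_one (hA : A.IsHermitian) (hAA : IsIdempotentElem A)
    (i : n) : hA.eigenvalues i = 0 ∨ hA.eigenvalues i = 1 := by
  simpa using hAA.spectrum_subset ℝ (hA.spectrum_real_eq_range_eigenvalues ▸ Set.mem_range_self i)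

theorem IsHermitian.sum_comp_eigenvalues_of_isIdempotentElem_of_trace_eq_one
    (hA : A.IsHermitian) (hAA : IsIdempotentElem A) (htr : A.trace = 1) (g : ℝ → ℝ) :
    ∑ i, g (hA.eigenvalues i) = g 1 + (Fintype.card n - 1) * g 0 := by
  have hsum : ∑ i, hA.eigenvalues i = 1 := by
    exact_mod_cast hA.trace_eq_sum_eigenvalues.symm.trans htr
  have hlin (i : n) :
      g (hA.eigenvalues i) = hA.eigenvalues i * g 1 + (1 - hA.eigenvalues i) * g 0 := by
    rcases hA.eigenvalues_eq_zero_or_one hAA i with h | h <;> simp [h]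
  simp only [hlin, Finset.sum_add_distrib, ← Finset.sum_mul, Finset.sum_sub_distrib, hsum]
  simp

end Matrix

section SpectralFunctions

variable {n : Type*} [Fintype n] [DecidableEq n] {A : Matrix n n ℂ}

theorem vnEntropy_cfc (hA : A.IsHermitian) (f : ℝ → ℝ) :
    vnEntropy (cfc f A) = ∑ i, Real.negMulLog (f (hA.eigenvalues i)) := by
  have hB : (cfc f A).IsHermitian := cfc_predicate f A
  rw [vnEntropy, dif_pos hB, hA.sum_comp_eigenvalues_cfc f hB]

theorem traceNorm_cfc (hA : A.IsHermitian) (f : ℝ → ℝ) :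
    traceNorm (cfc f A) = ∑ i, |f (hA.eigenvalues i)| := by
  have hsq : (cfc f A)ᴴ * cfc f A = cfc (fun x => f x ^ 2) A := by
    rw [(show (cfc f A).IsHermitian from cfc_predicate f A).eq,
      cfc_pow f 2 A (Matrix.finite_real_spectrum.continuousOn f), sq]
  -- The eigenvalues in `traceNorm` depend on a proof about the matrix, so it cannot be rewritten
  -- in place.
  have hsum_sqrt : ∀ (B : Matrix n n ℂ) (hB : B.IsHermitian), B = cfc (fun x => f x ^ 2) A →
      ∑ i, √(hB.eigenvalues i) = ∑ i, |f (hA.eigenvalues i)| := by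
    rintro _ hB rfl
    simp only [hA.sum_comp_eigenvalues_cfc _ hB, Real.sqrt_sq_eq_abs]
  exact hsum_sqrt _ _ hsq

theorem traceNorm_smul_add_smul_one_sub {P : Matrix n n ℂ} (hP : P.IsHermitian)
    (hPP : IsIdempotentElem P) (htr : P.trace = 1) (a b : ℝ) :
    traceNorm (a • P + b • (1 - P)) = |a| + (Fintype.card n - 1) * |b| := by
  rw [← cfc_mul_add_mul_one_sub hP.isSelfAdjoint, traceNorm_cfc hP,
    hP.sum_comp_eigenvalues_of_isIdempotentElem_of_trace_eq_one hPP htr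
      (fun x => |a * x + b * (1 - x)|)]
  simp

theorem vnEntropy_smul_add_smul_one_sub {P : Matrix n n ℂ} (hP : P.IsHermitian)
    (hPP : IsIdempotentElem P) (htr : P.trace = 1) (a b : ℝ) :
    vnEntropy (a • P + b • (1 - P)) = a.negMulLog + (Fintype.card n - 1) * b.negMulLog := by
  rw [← cfc_mul_add_mul_one_sub hP.isSelfAdjoint, vnEntropy_cfc hP,
    hP.sum_comp_eigenvalues_of_isIdempotentElem_of_trace_eq_one hPP htr
      (fun x => (a * x + b * (1 - x)).negMulLog)]
  simp

end SpectralFunctions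

theorem Real.mul_negMulLog_div {m : ℝ} (hm : 0 < m) (x : ℝ) :
    m * negMulLog (x / m) = x * log m + negMulLog x := by
  rcases eq_or_ne x 0 with rfl | hx
  · simp
  rw [negMulLog, negMulLog, log_div hx hm.ne']
  field_simp
  ring

section PartialTrace

variable {a b : ℕ}

theorem ptraceA_add (ρ σ : Matrix (Fin a × Fin b) (Fin a × Fin b) ℂ) :
    ptraceA (ρ + σ) = ptraceA ρ + ptraceA σ := by
  ext; simp [ptraceA, Finset.sum_add_distrib]

theorem ptraceA_sub (ρ σ : Matrix (Fin a × Fin b) (Fin a × Fin b) ℂ) :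
    ptraceA (ρ - σ) = ptraceA ρ - ptraceA σ := by
  ext; simp [ptraceA, Finset.sum_sub_distrib]

theorem ptraceA_smul (r : ℝ) (ρ : Matrix (Fin a × Fin b) (Fin a × Fin b) ℂ) :
    ptraceA (r • ρ) = r • ptraceA ρ := by
  ext; simp [ptraceA, Finset.smul_sum]

theorem ptraceA_one : ptraceA (1 : Matrix (Fin a × Fin b) (Fin a × Fin b) ℂ) = (a : ℂ) • 1 := by
  ext j j'; by_cases h : j = j' <;> simp [ptraceA, one_apply, h]

end PartialTrace

section MaxEntangled

noncomputable def maxEntangled (d : ℕ) : Matrix (Fin d × Fin d) (Fin d × Fin d) ℂ :=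
  Matrix.of fun z w => if z.1 = z.2 ∧ w.1 = w.2 then 1 / (d : ℂ) else 0

variable {d : ℕ}

theorem isHermitian_maxEntangled : (maxEntangled d).IsHermitian := by
  ext z w
  simp only [maxEntangled, conjTranspose_apply, of_apply]
  split_ifs <;> simp_all [and_comm]

theorem isIdempotentElem_maxEntangled (hd : d ≠ 0) : IsIdempotentElem (maxEntangled d) := by
  ext z w
  simp only [maxEntangled, Matrix.mul_apply, of_apply, Fintype.sum_prod_type]
  by_cases h1 : z.1 = z.2 <;> by_cases h2 : w.1 = w.2 <;> simp [h1, h2, Finset.sum_ite_eq, hd]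

theorem trace_maxEntangled (hd : d ≠ 0) : (maxEntangled d).trace = 1 := by
  simp [maxEntangled, Matrix.trace, Fintype.sum_prod_type, hd]

theorem ptraceA_maxEntangled : ptraceA (maxEntangled d) = (d : ℂ)⁻¹ • 1 := by
  ext j j'
  by_cases h : j = j'
  · simp [ptraceA, maxEntangled, h]
  · have hne (i : Fin d) : ¬(i = j ∧ i = j') := fun hi => h (hi.1.symm.trans hi.2)
    simp [ptraceA, maxEntangled, h, hne]

theorem ptraceA_smul_maxEntangled_add_smul_one_sub (hd : d ≠ 0) (p q : ℝ) :
    ptraceA (p • maxEntangled d + q • (1 - maxEntangled d))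
      = (p + q * ((d : ℝ) ^ 2 - 1)) • ptraceA (maxEntangled d) := by
  rw [ptraceA_add, ptraceA_smul, ptraceA_smul, ptraceA_sub, ptraceA_one, ptraceA_maxEntangled]
  ext i j
  by_cases h : i = j
  · simp [h, Complex.real_smul]
    field_simp
  · simp [h]

end MaxEntangled

theorem stmt_10_general {d : ℕ} (hd : 2 ≤ d) (ε : ℝ) (hε0 : 0 ≤ ε)
    (Φ : Matrix (Fin d × Fin d) (Fin d × Fin d) ℂ)
    (hΦ : Φ = Matrix.of fun z w =>
      if z.1 = z.2 ∧ w.1 = w.2 then (1 / (d : ℂ)) else 0)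
    (ρ : Matrix (Fin d × Fin d) (Fin d × Fin d) ℂ)
    (hρ : ρ = (1 - ε) • Φ + (ε / ((d : ℝ)^2 - 1)) • ((1 : Matrix (Fin d × Fin d) (Fin d × Fin d) ℂ) - Φ)) :
    (1/2) * traceNorm (ρ - Φ) = ε ∧
    condEnt ρ - condEnt Φ = ε * Real.log ((d : ℝ)^2 - 1) + binEnt ε := by
  obtain rfl : Φ = maxEntangled d := hΦ
  have hd0 : d ≠ 0 := by omega
  have hm : (0 : ℝ) < (d : ℝ) ^ 2 - 1 := by
    have : (2 : ℝ) ≤ d := by exact_mod_cast hd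
    nlinarith
  set c := ε / ((d : ℝ) ^ 2 - 1)
  have hcm : c * ((d : ℝ) ^ 2 - 1) = ε := div_mul_cancel₀ ε hm.ne'
  have hP := isHermitian_maxEntangled (d := d)
  have hPP := isIdempotentElem_maxEntangled hd0
  have htr := trace_maxEntangled hd0
  have hcard : ((Fintype.card (Fin d × Fin d) : ℕ) : ℝ) - 1 = (d : ℝ) ^ 2 - 1 := by simp [sq]
  constructor
  · have hdiff : ρ - maxEntangled d = (-ε) • maxEntangled d + c • (1 - maxEntangled d) := by
      rw [hρ]; module
    rw [hdiff, traceNorm_smul_add_smul_one_sub hP hPP htr, hcard, abs_neg, abs_of_nonneg hε0,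
      abs_of_nonneg (div_nonneg hε0 hm.le)]
    linear_combination hcm / 2
  · have hptr : ptraceA ρ = ptraceA (maxEntangled d) := by
      rw [hρ, ptraceA_smul_maxEntangled_add_smul_one_sub hd0, hcm, sub_add_cancel, one_smul]
    have hΦ_decomp : maxEntangled d = (1 : ℝ) • maxEntangled d + (0 : ℝ) • (1 - maxEntangled d) := by
      module
    rw [condEnt, condEnt, hptr, hρ, vnEntropy_smul_add_smul_one_sub hP hPP htr, hΦ_decomp,
      vnEntropy_smul_add_smul_one_sub hP hPP htr, hcard, Real.mul_negMulLog_div hm, binEnt]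
    simp
    ring

theorem stmt_10 {d : ℕ} (hd : 2 ≤ d) (ε : ℝ) (hε0 : 0 ≤ ε) (hε1 : ε ≤ 1 - 1 / (d : ℝ)^2)
    (Φ : Matrix (Fin d × Fin d) (Fin d × Fin d) ℂ)
    (hΦ : Φ = Matrix.of fun z w =>
      if z.1 = z.2 ∧ w.1 = w.2 then (1 / (d : ℂ)) else 0)
    (ρ : Matrix (Fin d × Fin d) (Fin d × Fin d) ℂ)
    (hρ : ρ = (1 - ε) • Φ + (ε / ((d : ℝ)^2 - 1)) • ((1 : Matrix (Fin d × Fin d) (Fin d × Fin d) ℂ) - Φ)) :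
    (1/2) * traceNorm (ρ - Φ) = ε ∧
    condEnt ρ - condEnt Φ = ε * Real.log ((d : ℝ)^2 - 1) + binEnt ε :=
  stmt_10_general hd ε hε0 Φ hΦ ρ hρ
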